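/- Let f : ℝⁿ → ℝ ∪ {+∞} be a closed (lower semicontinuous), proper, convex function whose effective domain dom f is nonempty, closed and convex. If f is non-steep — i.e., f is differentiable on the relative interior rint(dom f) and ‖∇f(x_k)‖ remains bounded along every sequence (x_k) in rint(dom f) converging to a point of the relative boundary of dom f — then every relative boundary point of dom f belongs to dom ∂f, and dom ∂f = dom f. -/

import Mathlib

/-!
Let `x` be a relative boundary point of `dom f` and `y ∈ rint (dom f)`. The points
`xₖ = (1 - 1/(k+1)) x + 1/(k+1) y` lie in `rint (dom f)` and tend to `x`. At each `xₖ` the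
gradient of the convex function `f` is a subgradient, and non-steepness bounds these gradients,
so a subsequence converges to some `v`. Lower semicontinuity of `f` makes the graph of `∂f`
closed, hence `v ∈ ∂f x`. On `rint (dom f)` the gradient itself is a subgradient, and `∂f` is
empty outside `dom f` since `f` is proper.
-/

open Set Filter Topology

noncomputable section

abbrev E (n : ℕ) : Type := EuclideanSpace ℝ (Fin n)

/-- effective domain of an extended-real-valued function -/
def edom {n : ℕ} (f : E n → EReal) : Set (E n) := {x | f x < ⊤}

/-- proper: never −∞ and not identically +∞ -/
def properE {n : ℕ} (f : E n → EReal) : Prop := (∀ x, f x ≠ ⊥) ∧ ∃ x, f x ≠ ⊤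

def convexE {n : ℕ} (f : E n → EReal) : Prop :=
  ∀ x y : E n, ∀ a b : ℝ, 0 ≤ a → 0 ≤ b → a + b = 1 →
    f (a • x + b • y) ≤ (a : EReal) * f x + (b : EReal) * f y

def stronglyConvexE {n : ℕ} (ρ : ℝ) (f : E n → EReal) : Prop :=
  convexE (fun x => f x - (((ρ / 2) * ‖x‖ ^ 2 : ℝ) : EReal))

def subdiff {n : ℕ} (f : E n → EReal) (x : E n) : Set (E n) :=
  {v | ∀ y : E n, f x + ((inner ℝ v (y - x) : ℝ) : EReal) ≤ f y}

def domSubdiff {n : ℕ} (f : E n → EReal) : Set (E n) := {x | (subdiff f x).Nonempty}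

/-- relative boundary -/
def rbd {n : ℕ} (s : Set (E n)) : Set (E n) := closure s \ intrinsicInterior ℝ s

def Steep {n : ℕ} (f : E n → EReal) : Prop :=
  ∃ g : E n → E n,
    (∀ x ∈ intrinsicInterior ℝ (edom f),
      HasGradientAt (fun y => (f y).toReal) (g x) x) ∧
    ∀ (xs : ℕ → E n) (p : E n),
      (∀ k, xs k ∈ intrinsicInterior ℝ (edom f)) →
      p ∈ rbd (edom f) → Tendsto xs atTop (nhds p) →
      Tendsto (fun k => ‖g (xs k)‖) atTop atTop

def NonSteep {n : ℕ} (f : E n → EReal) : Prop :=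
  ∃ g : E n → E n,
    (∀ x ∈ intrinsicInterior ℝ (edom f),
      HasGradientAt (fun y => (f y).toReal) (g x) x) ∧
    ∀ (xs : ℕ → E n) (p : E n),
      (∀ k, xs k ∈ intrinsicInterior ℝ (edom f)) →
      p ∈ rbd (edom f) → Tendsto xs atTop (nhds p) →
      ∃ M : ℝ, ∀ k, ‖g (xs k)‖ ≤ M

/-- convex conjugate -/
def conjE {n : ℕ} (f : E n → EReal) (z : E n) : EReal :=
  ⨆ x : E n, (((inner ℝ x z : ℝ) : EReal) - f x)

def strictConvexOnE {n : ℕ} (s : Set (E n)) (f : E n → EReal) : Prop :=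
  ∀ x ∈ s, ∀ y ∈ s, x ≠ y → ∀ a b : ℝ, 0 < a → 0 < b → a + b = 1 →
    f (a • x + b • y) < (a : EReal) * f x + (b : EReal) * f y

def EssentiallySmoothE {n : ℕ} (f : E n → EReal) : Prop :=
  ∃ g : E n → E n,
    (∀ x ∈ interior (edom f), HasGradientAt (fun y => (f y).toReal) (g x) x) ∧
    ∀ (xs : ℕ → E n) (p : E n),
      (∀ k, xs k ∈ interior (edom f)) → p ∈ frontier (edom f) →
      Tendsto xs atTop (nhds p) →
      Tendsto (fun k => ‖g (xs k)‖) atTop atTop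

def EssentiallyStrictlyConvexE {n : ℕ} (f : E n → EReal) : Prop :=
  ∀ s : Set (E n), s ⊆ domSubdiff f → Convex ℝ s → strictConvexOnE s f

def LegendreE {n : ℕ} (f : E n → EReal) : Prop :=
  EssentiallySmoothE f ∧ EssentiallyStrictlyConvexE f

def SupercoerciveE {n : ℕ} (f : E n → EReal) : Prop :=
  ∀ M : ℝ, ∃ R : ℝ, ∀ x : E n, R ≤ ‖x‖ → ((M * ‖x‖ : ℝ) : EReal) ≤ f x

section IntrinsicInterior

variable {V : Type*} [NormedAddCommGroup V] [NormedSpace ℝ V]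

theorem intrinsicInterior_eq_interior_of_affineSpan_eq_top {s : Set V}
    (hs : affineSpan ℝ s = ⊤) : intrinsicInterior ℝ s = interior s := by
  refine Subset.antisymm ?_ interior_subset_intrinsicInterior
  have hopen : IsOpenMap ((↑) : affineSpan ℝ s → V) :=
    (show IsOpen (affineSpan ℝ s : Set V) by simp [hs]).isOpenMap_subtype_val
  rintro _ ⟨z, hz, rfl⟩
  exact interior_mono (image_preimage_subset _ _) (hopen.image_interior_subset _ ⟨z, hz, rfl⟩)

variable [FiniteDimensional ℝ V]

theorem Convex.combo_closure_intrinsicInterior_mem_intrinsicInterior {s : Set V}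
    (hs : Convex ℝ s) {x y : V} (hx : x ∈ closure s) (hy : y ∈ intrinsicInterior ℝ s)
    {a b : ℝ} (ha : 0 ≤ a) (hb : 0 < b) (hab : a + b = 1) :
    a • x + b • y ∈ intrinsicInterior ℝ s := by
  -- Transport `s` into the direction of its affine span, where it spans everything and so its
  -- intrinsic interior is its interior.
  have : Nonempty s := ⟨⟨y, intrinsicInterior_subset hy⟩⟩
  set A := affineSpan ℝ s
  let p : A := ⟨y, subset_affineSpan ℝ s (intrinsicInterior_subset hy)⟩
  have : Nonempty A := ⟨p⟩
  let e := (AffineIsometryEquiv.constVSub ℝ p).symm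
  let φ : A.direction →ᵃⁱ[ℝ] V := A.subtypeₐᵢ.comp e.toAffineIsometry
  set t := φ ⁻¹' s
  have himg : φ '' t = s := by
    refine image_preimage_eq_of_subset fun z hz => ?_
    obtain ⟨w, hw⟩ := e.surjective ⟨z, subset_affineSpan ℝ s hz⟩
    exact ⟨w, congrArg Subtype.val hw⟩
  have hspan : affineSpan ℝ t = ⊤ := by
    change affineSpan ℝ (e.toAffineEquiv ⁻¹' ((↑) ⁻¹' s)) = ⊤
    rw [← AffineSubspace.comap_span, affineSpan_coe_preimage_eq_top, AffineSubspace.comap_top]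
  have hclosure : closure s = φ '' closure t := by
    rw [← himg, φ.isometry.isClosedEmbedding.closure_image_eq]
  have hinterior : intrinsicInterior ℝ s = φ '' interior t := by
    rw [← himg, AffineIsometry.intrinsicInterior_image,
      intrinsicInterior_eq_interior_of_affineSpan_eq_top hspan]
  rw [hclosure] at hx
  rw [hinterior] at hy ⊢
  obtain ⟨u, hu, rfl⟩ := hx
  obtain ⟨v, hv, hvy⟩ := hy
  refine ⟨a • u + b • v,
    (hs.affine_preimage φ.toAffineMap).combo_closure_interior_mem_interior hu hv ha hb hab, ?_⟩
  rw [← hvy]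
  exact Convex.combo_affine_apply (f := φ.toAffineMap) hab

end IntrinsicInterior

theorem LowerSemicontinuousAt.le_of_tendsto {α β γ : Type*} [TopologicalSpace α]
    [LinearOrder β] [DenselyOrdered β] [TopologicalSpace β] [ClosedIciTopology β]
    {f : α → β} {x : α} {l : Filter γ} [l.NeBot] {u : γ → α} {c : γ → β} {c₀ : β}
    (hf : LowerSemicontinuousAt f x) (hu : Tendsto u l (𝓝 x)) (hc : Tendsto c l (𝓝 c₀))
    (hle : ∀ᶠ k in l, f (u k) ≤ c k) : f x ≤ c₀ :=
  le_of_forall_lt_imp_le_of_dense fun a ha =>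
    ge_of_tendsto hc <| ((hu.eventually (hf a ha)).and hle).mono fun _ hk => hk.1.le.trans hk.2

theorem ConvexOn.inner_gradient_le_sub {V : Type*} [NormedAddCommGroup V] [InnerProductSpace ℝ V]
    [CompleteSpace V] {s : Set V} {F : V → ℝ} {x y g : V} (hF : ConvexOn ℝ s F) (hx : x ∈ s)
    (hy : y ∈ s) (hg : HasGradientAt F g x) : inner ℝ g (y - x) ≤ F y - F x := by
  have hline : HasDerivAt (F ∘ AffineMap.lineMap (k := ℝ) x y) (inner ℝ g (y - x)) 0 := by
    have hFx : HasFDerivAt F (InnerProductSpace.toDual ℝ V g)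
        (AffineMap.lineMap x y (0 : ℝ)) := by
      simpa using hg.hasFDerivAt
    simpa using hFx.comp_hasDerivAt (0 : ℝ) AffineMap.hasDerivAt_lineMap
  have hslope := (hF.comp_affineMap (AffineMap.lineMap x y)).le_slope_of_hasDerivAt
    (by simpa using hx) (by simpa using hy) zero_lt_one hline
  simpa [slope_def_field] using hslope

namespace convexE

variable {n : ℕ} {f : E n → EReal}

theorem convex_edom (hf : convexE f) : Convex ℝ (edom f) := by
  intro x hx y hy a b ha hb hab
  refine (hf x y a b ha hb hab).trans_lt (EReal.add_lt_top ?_ ?_) <;>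
    refine (EReal.mul_ne_top _ _).2 ⟨.inl (EReal.coe_ne_bot _), .inl (EReal.coe_nonneg.2 ‹_›),
      .inl (EReal.coe_ne_top _), .inr (ne_of_lt ‹_›)⟩

theorem convexOn_toReal (hf : convexE f) (hbot : ∀ x, f x ≠ ⊥) :
    ConvexOn ℝ (edom f) (fun x => (f x).toReal) := by
  refine ⟨hf.convex_edom, fun x hx y hy a b ha hb hab => ?_⟩
  have hcomb := hf x y a b ha hb hab
  rw [← EReal.coe_toReal hx.ne (hbot x), ← EReal.coe_toReal hy.ne (hbot y), ← EReal.coe_mul,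
    ← EReal.coe_mul, ← EReal.coe_add] at hcomb
  exact (EReal.toReal_le_toReal hcomb (hbot _) (EReal.coe_ne_top _)).trans_eq (EReal.toReal_coe _)

theorem mem_subdiff_of_hasGradientAt (hf : convexE f) (hbot : ∀ x, f x ≠ ⊥) {x g : E n}
    (hx : x ∈ edom f) (hg : HasGradientAt (fun y => (f y).toReal) g x) : g ∈ subdiff f x := by
  intro y
  rcases eq_or_ne (f y) ⊤ with hy | hy
  · simp [hy]
  have key := (hf.convexOn_toReal hbot).inner_gradient_le_sub hx hy.lt_top hg
  rw [← EReal.coe_toReal hx.ne (hbot x), ← EReal.coe_toReal hy (hbot y), ← EReal.coe_add,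
    EReal.coe_le_coe_iff]
  linarith

end convexE

theorem mem_subdiff_of_tendsto {n : ℕ} {f : E n → EReal} {x v : E n} {ι : Type*}
    {l : Filter ι} [l.NeBot] {xs vs : ι → E n} (hf : LowerSemicontinuousAt f x)
    (hxs : Tendsto xs l (𝓝 x)) (hvs : Tendsto vs l (𝓝 v))
    (hsub : ∀ k, vs k ∈ subdiff f (xs k)) : v ∈ subdiff f x := by
  intro y
  refine EReal.le_of_forall_lt_iff_le.1 fun b hb => ?_
  rw [← EReal.le_sub_iff_add_le (.inl (EReal.coe_ne_bot _)) (.inl (EReal.coe_ne_top _)),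
    ← EReal.coe_sub]
  refine hf.le_of_tendsto hxs (c := fun k => ((b - inner ℝ (vs k) (y - xs k) : ℝ) : EReal))
    ((continuous_coe_real_ereal.tendsto _).comp
      (tendsto_const_nhds.sub (hvs.inner (tendsto_const_nhds.sub hxs)))) (.of_forall fun k => ?_)
  rw [EReal.coe_sub,
    EReal.le_sub_iff_add_le (.inl (EReal.coe_ne_bot _)) (.inl (EReal.coe_ne_top _))]
  exact (hsub k y).trans hb.le

namespace NonSteep

variable {n : ℕ} {f : E n → EReal}

theorem rbd_subset_domSubdiff (hns : NonSteep f) (hlsc : LowerSemicontinuous f)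
    (hbot : ∀ x, f x ≠ ⊥) (hconv : convexE f) : rbd (edom f) ⊆ domSubdiff f := by
  obtain ⟨g, hg, hbdd⟩ := hns
  intro x hx
  obtain ⟨y, hy⟩ : (intrinsicInterior ℝ (edom f)).Nonempty :=
    (closure_nonempty_iff.1 ⟨x, hx.1⟩).intrinsicInterior hconv.convex_edom
  set t : ℕ → ℝ := fun k => 1 / ((k : ℝ) + 1)
  set xs : ℕ → E n := fun k => (1 - t k) • x + t k • y
  have hxs_mem : ∀ k, xs k ∈ intrinsicInterior ℝ (edom f) := fun k =>
    hconv.convex_edom.combo_closure_intrinsicInterior_mem_intrinsicInterior hx.1 hy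
      (sub_nonneg.2 (div_le_one_of_le₀ (by simp) (by positivity))) (by positivity) (by ring)
  have hxs : Tendsto xs atTop (𝓝 x) := by
    have ht : Tendsto t atTop (𝓝 0) := tendsto_one_div_add_atTop_nhds_zero_nat
    simpa using ((ht.const_sub 1).smul_const x).add (ht.smul_const y)
  obtain ⟨M, hM⟩ := hbdd xs x hxs_mem hx hxs
  obtain ⟨v, -, ψ, hψ, hv⟩ := tendsto_subseq_of_bounded (Metric.isBounded_closedBall (x := 0))
    fun k => mem_closedBall_zero_iff.2 (hM k)
  exact ⟨v, mem_subdiff_of_tendsto (hlsc x) (hxs.comp hψ.tendsto_atTop) hv fun k =>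
    hconv.mem_subdiff_of_hasGradientAt hbot (intrinsicInterior_subset (hxs_mem _))
      (hg _ (hxs_mem _))⟩

end NonSteep

theorem domSubdiff_subset_edom {n : ℕ} {f : E n → EReal} (hf : ∃ y, f y ≠ ⊤) :
    domSubdiff f ⊆ edom f := by
  rintro x ⟨v, hv⟩
  obtain ⟨y, hy⟩ := hf
  refine (lt_top_iff_ne_top (a := f x)).2 fun hx => hy ?_
  simpa [hx] using hv y

theorem stmt1_general {n : ℕ} (f : E n → EReal)
    (hlsc : LowerSemicontinuous f) (hproper : properE f) (hconv : convexE f)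
    (hnonsteep : NonSteep f) :
    (rbd (edom f) ⊆ domSubdiff f) ∧ domSubdiff f = edom f := by
  have hrbd := hnonsteep.rbd_subset_domSubdiff hlsc hproper.1 hconv
  refine ⟨hrbd, (domSubdiff_subset_edom hproper.2).antisymm fun x hx => ?_⟩
  by_cases hxi : x ∈ intrinsicInterior ℝ (edom f)
  · obtain ⟨g, hg, -⟩ := hnonsteep
    exact ⟨g x, hconv.mem_subdiff_of_hasGradientAt hproper.1 hx (hg x hxi)⟩
  · exact hrbd ⟨subset_closure hx, hxi⟩

theorem stmt1 {n : ℕ} (f : E n → EReal)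
    (hlsc : LowerSemicontinuous f) (hproper : properE f) (hconv : convexE f)
    (hdom_ne : (edom f).Nonempty) (hdom_cl : IsClosed (edom f)) (hdom_conv : Convex ℝ (edom f))
    (hnonsteep : NonSteep f) :
    (rbd (edom f) ⊆ domSubdiff f) ∧ domSubdiff f = edom f :=
  stmt1_general f hlsc hproper hconv hnonsteep

end
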